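/- Let X_e, X_I be bounded real random variables and X_o a bounded ℝ^d-valued random variable on a probability space. Set Δ = X_e − E(X_e | X_I, X_o) and X_u = ρ₀Δ + ε, where ρ₀ ∈ ℝ and ε is a real random variable independent of (X_e, X_I, X_o) such that L(t) = E[exp(−εt)] is finite, strictly positive, and differentiable in t on [0, ∞). Let λ₁₀ : [0, ∞) → ℝ be continuous, β_e ∈ ℝ, β_o ∈ ℝ^d, and suppose the conditional cumulative incidence function of cause 1 given (X_e, X_I, X_o, X_u) is F₁(t | X_e, X_I, X_o, X_u) = 1 − exp(−∫₀ᵗ λ₁₀(s) ds − (β_e X_e + β_oᵀ X_o + X_u) t). Then, defining F₁(t | X_e, X_I, X_o) = E[F₁(t | X_e, X_I, X_o, X_u) | X_e, X_I, X_o], there is a version of these conditional expectations such that almost surely, for every t > 0, the subdistribution hazard −(∂/∂t) log(1 − F₁(t | X_e, X_I, X_o)) = λ̄₁₀(t) + β_e X_e + β_oᵀ X_o + ρ₀Δ, where λ̄₁₀(t) = λ₁₀(t) − (d/dt) log L(t). -/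

import Mathlib

/-!
Write `a = βₑXₑ + βₒᵀXₒ + ρ₀Δ` and `Λ(t) = ∫₀ᵗ λ₁₀`. Since `X_u = ρ₀Δ + ε`, the survival factor
`1 − F₁(t | ·) = exp(−Λ(t) − a t) · exp(−ε t)` splits into a factor that is measurable for the
observed σ-algebra of `(Xₑ, X_I, Xₒ)` (as `Δ` is, through `E(Xₑ | X_I, Xₒ)`) and one independent
of it. Pulling out the first and replacing the second by its mean gives the version
`1 − exp(−Λ(t) − a t) L(t)`, whose log-derivative is `−(λ₁₀ − L'/L + a)`. Boundedness of the
covariates makes the measurable factor essentially bounded, so the product stays integrable.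
-/

open MeasureTheory ProbabilityTheory
open scoped ENNReal

namespace MeasureTheory

variable {Ω : Type*} {m₁ m₂ m : MeasurableSpace Ω} {μ : Measure Ω}

theorem MemLp.exp {f : Ω → ℝ} (hf : MemLp f ∞ μ) : MemLp (fun ω => Real.exp (f ω)) ∞ μ := by
  obtain ⟨C, hC⟩ : Filter.IsBoundedUnder (· ≤ ·) (ae μ) fun ω => ‖f ω‖₊ :=
    eLpNormEssSup_lt_top_iff_isBoundedUnder.mp (eLpNorm_exponent_top (f := f) ▸ hf.2)
  refine memLp_top_of_bound (Real.continuous_exp.comp_aestronglyMeasurable hf.1) (Real.exp C) ?_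
  filter_upwards [hC] with ω hω
  rw [Real.norm_eq_abs, Real.abs_exp, Real.exp_le_exp]
  exact (le_abs_self _).trans (by exact_mod_cast hω)

theorem condExp_mul_indep_eq [IsFiniteMeasure μ] {f g : Ω → ℝ} (hle₁ : m₁ ≤ m) (hle₂ : m₂ ≤ m)
    (hf : StronglyMeasurable[m₂] f) (hf_top : MemLp f ∞ μ) (hg : StronglyMeasurable[m₁] g)
    (hg_int : Integrable g μ) (hindp : Indep m₁ m₂ μ) :
    μ[f * g | m₂] =ᵐ[μ] fun ω => f ω * μ[g] := by
  filter_upwards [condExp_mul_of_stronglyMeasurable_left hf (hg_int.mul_of_top_right hf_top) hg_int,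
    condExp_indep_eq hle₁ hle₂ hg hindp] with ω hpull hmean
  rw [hpull, Pi.mul_apply, hmean]

theorem condExp_one_sub_exp_mul_indep [IsFiniteMeasure μ] {a ε : Ω → ℝ} {c t : ℝ} (hle : m₂ ≤ m)
    (hε : Measurable[m] ε) (ha : StronglyMeasurable[m₂] a) (ha_top : MemLp a ∞ μ)
    (hint : Integrable (fun ω => Real.exp (-(ε ω * t))) μ)
    (hindp : Indep (MeasurableSpace.comap ε inferInstance) m₂ μ) :
    μ[fun ω => 1 - Real.exp (c - a ω * t + -(ε ω * t)) | m₂] =ᵐ[μ]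
      fun ω => 1 - Real.exp (c - a ω * t) * μ[fun ω => Real.exp (-(ε ω * t))] := by
  set f : Ω → ℝ := fun ω => Real.exp (c - a ω * t)
  set g : Ω → ℝ := fun ω => Real.exp (-(ε ω * t))
  have hf : StronglyMeasurable[m₂] f :=
    Real.continuous_exp.comp_stronglyMeasurable (stronglyMeasurable_const.sub (ha.mul_const t))
  have hf_top : MemLp f ∞ μ := ((memLp_const c).sub (ha_top.mul_const t)).exp
  have hg : StronglyMeasurable[MeasurableSpace.comap ε inferInstance] g :=
    ((by fun_prop : Measurable fun x : ℝ => Real.exp (-(x * t))).comp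
      (comap_measurable ε)).stronglyMeasurable
  have hsplit : (fun ω => 1 - Real.exp (c - a ω * t + -(ε ω * t))) = (fun _ => 1) - f * g := by
    funext ω
    simp only [Pi.sub_apply, Pi.mul_apply, f, g, Real.exp_add]
  rw [hsplit]
  filter_upwards [condExp_sub (integrable_const 1) (hint.mul_of_top_right hf_top) m₂,
    condExp_mul_indep_eq hε.comap_le hle hf hf_top hg hint hindp] with ω hsub hmean
  rw [hsub, Pi.sub_apply, hmean, condExp_const hle]

theorem memLp_top_linearPredictor [IsFiniteMeasure μ] {d : ℕ} {Xe : Ω → ℝ} {Xo : Ω → Fin d → ℝ}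
    (hXe : Measurable[m] Xe) (hXo : Measurable[m] Xo) (hXe_bdd : ∃ C : ℝ, ∀ ω, |Xe ω| ≤ C)
    (hXo_bdd : ∃ C : ℝ, ∀ ω j, |Xo ω j| ≤ C) (βe : ℝ) (βo : Fin d → ℝ) (ρ₀ : ℝ) :
    MemLp (fun ω => βe * Xe ω + (∑ j, βo j * Xo ω j) + ρ₀ * (Xe ω - μ[Xe | m₂] ω)) ∞ μ := by
  obtain ⟨Ce, hCe⟩ := hXe_bdd
  obtain ⟨Co, hCo⟩ := hXo_bdd
  have hXe_top : MemLp Xe ∞ μ := memLp_top_of_bound hXe.aestronglyMeasurable Ce (ae_of_all _ hCe)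
  have hXo_top (j : Fin d) : MemLp (fun ω => Xo ω j) ∞ μ :=
    memLp_top_of_bound (measurable_pi_apply j |>.comp hXo).aestronglyMeasurable Co
      (ae_of_all _ fun ω => hCo ω j)
  exact ((hXe_top.const_mul βe).add
    (memLp_finsetSum _ fun j _ => (hXo_top j).const_mul (βo j))).add
    ((hXe_top.sub (hXe_top.condExp le_top)).const_mul ρ₀)

end MeasureTheory

theorem hasDerivAt_integral_of_continuousOn_Ici {f : ℝ → ℝ} {a t : ℝ}
    (hf : ContinuousOn f (Set.Ici a)) (ht : a < t) :
    HasDerivAt (fun s => ∫ x in a..s, f x) (f t) t := by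
  refine intervalIntegral.integral_hasDerivAt_right ?_ ?_ ?_
  · refine ContinuousOn.intervalIntegrable (hf.mono ?_)
    rw [Set.uIcc_of_le ht.le]
    exact Set.Icc_subset_Ici_self
  · exact (hf.mono Set.Ioi_subset_Ici_self).stronglyMeasurableAtFilter isOpen_Ioi t ht
  · exact (hf t ht.le).continuousAt (Ici_mem_nhds ht)

theorem HasDerivAt.log_exp_mul {u L : ℝ → ℝ} {u' L' t : ℝ} (hu : HasDerivAt u u' t)
    (hL : HasDerivAt L L' t) (hLt : 0 < L t) :
    HasDerivAt (fun s => Real.log (Real.exp (u s) * L s)) (u' + L' / L t) t := by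
  refine ((hu.exp.mul hL).log (mul_pos (Real.exp_pos _) hLt).ne').congr_deriv ?_
  simp only [Pi.mul_apply]
  field_simp

theorem additive_subdistribution_hazards_collapsible_general
    {Ω : Type*} {m0 : MeasurableSpace Ω} (μ : Measure Ω) [IsProbabilityMeasure μ]
    {d : ℕ}
    (Xe XI : Ω → ℝ) (Xo : Ω → Fin d → ℝ) (ε : Ω → ℝ)
    (hXe : Measurable Xe) (hXI : Measurable XI) (hXo : Measurable Xo) (hε : Measurable ε)
    (hXe_bdd : ∃ C : ℝ, ∀ ω, |Xe ω| ≤ C)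
    (hXo_bdd : ∃ C : ℝ, ∀ ω j, |Xo ω j| ≤ C)
    (ρ₀ : ℝ)
    (hindep : IndepFun ε (fun ω => (Xe ω, XI ω, Xo ω)) μ)
    (m : MeasurableSpace Ω)
    (hm : m = MeasurableSpace.comap (fun ω => (XI ω, Xo ω)) inferInstance)
    (Δ : Ω → ℝ) (hΔ : Δ = fun ω => Xe ω - (μ[Xe | m]) ω)
    (Xu : Ω → ℝ) (hXu : Xu = fun ω => ρ₀ * Δ ω + ε ω)
    (L : ℝ → ℝ) (hLdef : ∀ t : ℝ, L t = ∫ ω, Real.exp (-(ε ω * t)) ∂μ)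
    (hLint : ∀ t : ℝ, 0 ≤ t → Integrable (fun ω => Real.exp (-(ε ω * t))) μ)
    (hLpos : ∀ t : ℝ, 0 ≤ t → 0 < L t)
    (L' : ℝ → ℝ) (hL' : ∀ t : ℝ, 0 ≤ t → HasDerivWithinAt L (L' t) (Set.Ici 0) t)
    (lam : ℝ → ℝ) (hlam : ContinuousOn lam (Set.Ici 0))
    (βe : ℝ) (βo : Fin d → ℝ)
    (F₁ : ℝ → Ω → ℝ)
    (hF₁ : ∀ t ω, F₁ t ω = 1 - Real.exp (-(∫ s in (0:ℝ)..t, lam s)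
      - (βe * Xe ω + (∑ j, βo j * Xo ω j) + Xu ω) * t))
    (mObs : MeasurableSpace Ω)
    (hmObs : mObs = MeasurableSpace.comap (fun ω => (Xe ω, XI ω, Xo ω)) inferInstance) :
    ∃ F₁bar : ℝ → Ω → ℝ,
      (∀ t : ℝ, 0 ≤ t → F₁bar t =ᵐ[μ] μ[F₁ t | mObs]) ∧
      (∀ᵐ ω ∂μ, ∀ t : ℝ, 0 < t →
        HasDerivAt (fun s => Real.log (1 - F₁bar s ω))
          (-((lam t - L' t / L t) + βe * Xe ω + (∑ j, βo j * Xo ω j) + ρ₀ * Δ ω)) t) := by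
  set a : Ω → ℝ := fun ω => βe * Xe ω + (∑ j, βo j * Xo ω j) + ρ₀ * Δ ω
  set Λ : ℝ → ℝ := fun t => ∫ s in (0:ℝ)..t, lam s
  have hobs : Measurable[mObs] fun ω => (Xe ω, XI ω, Xo ω) := hmObs ▸ comap_measurable _
  have hle : mObs ≤ m0 := hmObs ▸ (hXe.prodMk (hXI.prodMk hXo)).comap_le
  have hm_le : m ≤ mObs := hm ▸ (measurable_snd.comp hobs).comap_le
  have ha : StronglyMeasurable[mObs] a := by
    have hXe_obs : Measurable[mObs] Xe := measurable_fst.comp hobs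
    have hXo_obs : Measurable[mObs] Xo := measurable_snd.comp (measurable_snd.comp hobs)
    have hΔ_obs : Measurable[mObs] Δ :=
      hΔ ▸ hXe_obs.sub (stronglyMeasurable_condExp.measurable.mono hm_le le_rfl)
    exact Measurable.stronglyMeasurable (by fun_prop)
  have ha_top : MemLp a ∞ μ := by
    simpa only [a, hΔ] using memLp_top_linearPredictor hXe hXo hXe_bdd hXo_bdd βe βo ρ₀
  refine ⟨fun t ω => 1 - Real.exp (-(Λ t) - a ω * t) * L t, fun t ht => ?_,
    ae_of_all _ fun ω t ht => ?_⟩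
  · have hF : F₁ t = fun ω => 1 - Real.exp (-(Λ t) - a ω * t + -(ε ω * t)) := by
      funext ω
      simp only [hF₁, hXu, a, Λ]
      ring_nf
    have hindp : Indep (MeasurableSpace.comap ε inferInstance) mObs μ :=
      hmObs ▸ (IndepFun_iff_Indep _ _ _).mp hindep
    simp only [hF, hLdef]
    exact (condExp_one_sub_exp_mul_indep hle hε ha ha_top (hLint t ht) hindp).symm
  · have hu : HasDerivAt (fun s => -(Λ s) - a ω * s) (-(lam t) - a ω) t :=
      (hasDerivAt_integral_of_continuousOn_Ici hlam ht).neg.sub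
        (by simpa using (hasDerivAt_id t).const_mul (a ω))
    convert (hu.log_exp_mul ((hL' t ht.le).hasDerivAt (Ici_mem_nhds ht)) (hLpos t ht.le))
      using 1
    · simp only [sub_sub_cancel]
    · ring

/-- Collapsibility of the additive subdistribution hazards model for competing risks:
integrating out the unobserved confounder `X_u = ρ₀Δ + ε` from the conditional cumulative
incidence function `F₁(t | Xₑ, X_I, Xₒ, X_u) = 1 − exp(−∫₀ᵗ λ₁₀ − (βₑXₑ + βₒᵀXₒ + X_u)t)`,
there is a version `F̄₁` of the conditional expectations `E[F₁(t|·) | Xₑ, X_I, Xₒ]` such that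
almost surely, for every `t > 0`, the subdistribution hazard
`−(∂/∂t) log(1 − F̄₁(t)) = λ₁₀(t) − L'(t)/L(t) + βₑXₑ + βₒᵀXₒ + ρ₀Δ`,
where `L(t) = E[exp(−εt)]` and `Δ = Xₑ − E(Xₑ | X_I, Xₒ)`. -/
theorem additive_subdistribution_hazards_collapsible
    {Ω : Type*} {m0 : MeasurableSpace Ω} (μ : Measure Ω) [IsProbabilityMeasure μ]
    {d : ℕ}
    (Xe XI : Ω → ℝ) (Xo : Ω → Fin d → ℝ) (ε : Ω → ℝ)
    (hXe : Measurable Xe) (hXI : Measurable XI) (hXo : Measurable Xo) (hε : Measurable ε)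
    (hXe_bdd : ∃ C : ℝ, ∀ ω, |Xe ω| ≤ C) (hXI_bdd : ∃ C : ℝ, ∀ ω, |XI ω| ≤ C)
    (hXo_bdd : ∃ C : ℝ, ∀ ω j, |Xo ω j| ≤ C)
    (ρ₀ : ℝ)
    (hindep : IndepFun ε (fun ω => (Xe ω, XI ω, Xo ω)) μ)
    (m : MeasurableSpace Ω)
    (hm : m = MeasurableSpace.comap (fun ω => (XI ω, Xo ω)) inferInstance)
    (Δ : Ω → ℝ) (hΔ : Δ = fun ω => Xe ω - (μ[Xe | m]) ω)
    (Xu : Ω → ℝ) (hXu : Xu = fun ω => ρ₀ * Δ ω + ε ω)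
    (L : ℝ → ℝ) (hLdef : ∀ t : ℝ, L t = ∫ ω, Real.exp (-(ε ω * t)) ∂μ)
    (hLint : ∀ t : ℝ, 0 ≤ t → Integrable (fun ω => Real.exp (-(ε ω * t))) μ)
    (hLpos : ∀ t : ℝ, 0 ≤ t → 0 < L t)
    (L' : ℝ → ℝ) (hL' : ∀ t : ℝ, 0 ≤ t → HasDerivWithinAt L (L' t) (Set.Ici 0) t)
    (lam : ℝ → ℝ) (hlam : ContinuousOn lam (Set.Ici 0))
    (βe : ℝ) (βo : Fin d → ℝ)
    (F₁ : ℝ → Ω → ℝ)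
    (hF₁ : ∀ t ω, F₁ t ω = 1 - Real.exp (-(∫ s in (0:ℝ)..t, lam s)
      - (βe * Xe ω + (∑ j, βo j * Xo ω j) + Xu ω) * t))
    (mObs : MeasurableSpace Ω)
    (hmObs : mObs = MeasurableSpace.comap (fun ω => (Xe ω, XI ω, Xo ω)) inferInstance) :
    ∃ F₁bar : ℝ → Ω → ℝ,
      (∀ t : ℝ, 0 ≤ t → F₁bar t =ᵐ[μ] μ[F₁ t | mObs]) ∧
      (∀ᵐ ω ∂μ, ∀ t : ℝ, 0 < t →
        HasDerivAt (fun s => Real.log (1 - F₁bar s ω))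
          (-((lam t - L' t / L t) + βe * Xe ω + (∑ j, βo j * Xo ω j) + ρ₀ * Δ ω)) t) :=
  additive_subdistribution_hazards_collapsible_general (m0 := m0) μ Xe XI Xo ε hXe hXI hXo hε
    hXe_bdd hXo_bdd ρ₀ hindep m hm Δ hΔ Xu hXu L hLdef hLint hLpos L' hL' lam hlam βe βo F₁ hF₁ mObs
    hmObs
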